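/- arXiv:1206.0082 — 3 statements merged into one kernel-verified Lean document; each statement's English description precedes it below -/
import Mathlib

section
/- Let k be a positive integer and let S_{k,k} be the symmetric double star graph with central vertices u and v (the two adjacent vertices of degree k+1). Then for every real time τ there is no perfect state transfer from u to v at time τ. -/
open Matrix

noncomputable section

/-- Vertex set of the double star `S_{k,ℓ}`: `Sum.inl 0` is the centre `u`,
`Sum.inl 1` the centre `v`, `Sum.inr (Sum.inl i)` are the pendant neighbours of `u`,
and `Sum.inr (Sum.inr j)` are the pendant neighbours of `v`. -/
abbrev DSVertex (k l : ℕ) := (Fin 2) ⊕ (Fin k ⊕ Fin l)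

/-- The double star graph `S_{k,ℓ}`: the centres `u = Sum.inl 0` and `v = Sum.inl 1` are
adjacent, `u` is adjacent to its `k` pendant vertices and `v` to its `ℓ` pendant vertices. -/
def doubleStar (k l : ℕ) : SimpleGraph (DSVertex k l) :=
  SimpleGraph.fromRel (fun a b =>
    (a = Sum.inl 0 ∧ b = Sum.inl 1) ∨
    (∃ i : Fin k, a = Sum.inl 0 ∧ b = Sum.inr (Sum.inl i)) ∨
    (∃ j : Fin l, a = Sum.inl 1 ∧ b = Sum.inr (Sum.inr j)))

instance (k l : ℕ) : DecidableRel (doubleStar k l).Adj := fun _ _ => Classical.dec _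

/-- The continuous quantum walk `U(t) = exp(itA)`. -/
def qWalk {n : Type*} [Fintype n] [DecidableEq n] (A : Matrix n n ℂ) (t : ℝ) :
    Matrix n n ℂ :=
  NormedSpace.exp ((Complex.I * (t : ℂ)) • A)

/-- Perfect state transfer from `a` to `b` at time `τ` for the quantum walk of `A`:
`U(τ) e_a = γ e_b` for some `γ` with `|γ| = 1`. -/
def IsPST {n : Type*} [Fintype n] [DecidableEq n] (A : Matrix n n ℂ) (a b : n) (τ : ℝ) :
    Prop :=
  ∃ γ : ℂ, ‖γ‖ = 1 ∧ (qWalk A τ).mulVec (Pi.single a 1) = γ • (Pi.single b 1 : n → ℂ)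

/-!
The swap `u ↔ v` splits the walk into a symmetric and an antisymmetric part. For each root `r`
of `x² - x - k`, the vector `r (e_u + e_v) + 𝟙_leaves` is an eigenvector with eigenvalue `r`, and
`-r (e_u - e_v) + 𝟙_{leaves of u} - 𝟙_{leaves of v}` one with eigenvalue `-r`. Writing `e_u` in
these four eigenvectors gives the amplitude
`U(τ)_{vu} = i (r₁ sin τr₁ - r₂ sin τr₂) / (r₁ - r₂)`, where `r₁ > 0 > r₂`.
Its modulus is `1` only if `|sin τr₁| = |sin τr₂| = 1`, i.e. `τr₁, τr₂ ∈ π/2 + πℤ`. Since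
`r₁ + r₂ = 1` and `(r₁ - r₂)² = 1 + 4k`, this gives integers with
`(1 + 4k)(a + b + 1)² = (a - b)²`, impossible because `a + b + 1` and `a - b` have opposite parity.
-/

theorem Matrix.exp_mulVec_of_mulVec_eq_smul {n : Type*} [Fintype n] [DecidableEq n]
    {A : Matrix n n ℂ} {x : n → ℂ} {μ : ℂ} (h : A *ᵥ x = μ • x) :
    NormedSpace.exp A *ᵥ x = Complex.exp μ • x := by
  let : NormedRing (Matrix n n ℂ) := Matrix.linftyOpNormedRing
  let : NormedAlgebra ℂ (Matrix n n ℂ) := Matrix.linftyOpNormedAlgebra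
  have hpow (j : ℕ) : A ^ j *ᵥ x = μ ^ j • x := by
    induction j with
    | zero => simp
    | succ j ih =>
      rw [pow_succ, ← Matrix.mulVec_mulVec, h, Matrix.mulVec_smul, ih, smul_smul, pow_succ']
  have hA := (NormedSpace.exp_series_hasSum_exp' (𝕂 := ℂ) A).map
    (Matrix.mulVec.addMonoidHomLeft x) (continuous_id.matrix_mulVec continuous_const)
  have hμ := (NormedSpace.exp_series_hasSum_exp' (𝕂 := ℂ) μ).smul_const x
  simp only [Function.comp_def, Matrix.mulVec.addMonoidHomLeft] at hA
  rw [Complex.exp_eq_exp_ℂ]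
  refine hA.unique ?_
  simpa [Matrix.smul_mulVec, hpow, smul_smul] using hμ

theorem qWalk_mulVec_of_mulVec_eq_smul {n : Type*} [Fintype n] [DecidableEq n]
    {A : Matrix n n ℂ} {x : n → ℂ} {μ : ℂ} (h : A *ᵥ x = μ • x) (t : ℝ) :
    qWalk A t *ᵥ x = Complex.exp (Complex.I * t * μ) • x := by
  apply Matrix.exp_mulVec_of_mulVec_eq_smul
  rw [Matrix.smul_mulVec, h, smul_smul]

section DoubleStar

variable {α : Type*} [NonAssocSemiring α] {k l : ℕ} (f : DSVertex k l → α)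

@[simp]
theorem doubleStar_adjMatrix_mulVec_inl_zero :
    ((doubleStar k l).adjMatrix α *ᵥ f) (Sum.inl 0) =
      f (Sum.inl 1) + ∑ i, f (Sum.inr (Sum.inl i)) := by
  simp only [Matrix.mulVec, dotProduct, Fintype.sum_sum_type, Fin.sum_univ_two,
    SimpleGraph.adjMatrix_apply]
  simp [doubleStar]

@[simp]
theorem doubleStar_adjMatrix_mulVec_inl_one :
    ((doubleStar k l).adjMatrix α *ᵥ f) (Sum.inl 1) =
      f (Sum.inl 0) + ∑ j, f (Sum.inr (Sum.inr j)) := by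
  simp only [Matrix.mulVec, dotProduct, Fintype.sum_sum_type, Fin.sum_univ_two,
    SimpleGraph.adjMatrix_apply]
  simp [doubleStar]

@[simp]
theorem doubleStar_adjMatrix_mulVec_inr_inl (i : Fin k) :
    ((doubleStar k l).adjMatrix α *ᵥ f) (Sum.inr (Sum.inl i)) = f (Sum.inl 0) := by
  simp only [Matrix.mulVec, dotProduct, Fintype.sum_sum_type, Fin.sum_univ_two,
    SimpleGraph.adjMatrix_apply]
  simp [doubleStar]

@[simp]
theorem doubleStar_adjMatrix_mulVec_inr_inr (j : Fin l) :
    ((doubleStar k l).adjMatrix α *ᵥ f) (Sum.inr (Sum.inr j)) = f (Sum.inl 1) := by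
  simp only [Matrix.mulVec, dotProduct, Fintype.sum_sum_type, Fin.sum_univ_two,
    SimpleGraph.adjMatrix_apply]
  simp [doubleStar]

end DoubleStar

def symVec (k : ℕ) (r : ℂ) : DSVertex k k → ℂ :=
  Sum.elim (fun _ => r) (fun _ => 1)

def antisymVec (k : ℕ) (r : ℂ) : DSVertex k k → ℂ :=
  Sum.elim ![r, -r] (Sum.elim (fun _ => 1) (fun _ => -1))

theorem doubleStar_adjMatrix_mulVec_symVec (k : ℕ) {r : ℂ} (hr : r ^ 2 = r + k) :
    (doubleStar k k).adjMatrix ℂ *ᵥ symVec k r = r • symVec k r := by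
  ext (i | i | i)
  · fin_cases i <;> simp [symVec, -SimpleGraph.adjMatrix_mulVec_apply] <;>
      linear_combination -hr
  all_goals simp [symVec, -SimpleGraph.adjMatrix_mulVec_apply]

theorem doubleStar_adjMatrix_mulVec_antisymVec (k : ℕ) {r : ℂ} (hr : r ^ 2 = k - r) :
    (doubleStar k k).adjMatrix ℂ *ᵥ antisymVec k r = r • antisymVec k r := by
  ext (i | i | i)
  · fin_cases i
    · simp [antisymVec, -SimpleGraph.adjMatrix_mulVec_apply]
      linear_combination -hr
    · simp [antisymVec, -SimpleGraph.adjMatrix_mulVec_apply]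
      linear_combination hr
  all_goals simp [antisymVec, -SimpleGraph.adjMatrix_mulVec_apply]

theorem single_inl_zero_eq_symVec_antisymVec (k : ℕ) {r₁ r₂ : ℂ} (hne : r₁ ≠ r₂) :
    (Pi.single (Sum.inl 0) 1 : DSVertex k k → ℂ) = (2 * (r₁ - r₂))⁻¹ •
      (symVec k r₁ - symVec k r₂ - antisymVec k (-r₁) + antisymVec k (-r₂)) := by
  have hsub : r₁ - r₂ ≠ 0 := sub_ne_zero.2 hne
  ext (i | i | i)
  · fin_cases i <;> simp [symVec, antisymVec]
    field_simp
    ring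
  all_goals simp [symVec, antisymVec]

theorem qWalk_doubleStar_centre_amplitude (k : ℕ) (t : ℝ) {r₁ r₂ : ℂ}
    (h₁ : r₁ ^ 2 = r₁ + k) (h₂ : r₂ ^ 2 = r₂ + k) (hne : r₁ ≠ r₂) :
    (qWalk ((doubleStar k k).adjMatrix ℂ) t *ᵥ Pi.single (Sum.inl 0) 1) (Sum.inl 1) =
      (r₁ * (Complex.exp (Complex.I * t * r₁) - Complex.exp (-(Complex.I * t * r₁))) -
        r₂ * (Complex.exp (Complex.I * t * r₂) - Complex.exp (-(Complex.I * t * r₂)))) /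
        (2 * (r₁ - r₂)) := by
  have anti (r : ℂ) (hr : r ^ 2 = r + k) :=
    doubleStar_adjMatrix_mulVec_antisymVec k (r := -r) (by linear_combination hr)
  rw [single_inl_zero_eq_symVec_antisymVec k hne]
  simp only [Matrix.mulVec_smul, Matrix.mulVec_add, Matrix.mulVec_sub,
    qWalk_mulVec_of_mulVec_eq_smul (doubleStar_adjMatrix_mulVec_symVec k h₁),
    qWalk_mulVec_of_mulVec_eq_smul (doubleStar_adjMatrix_mulVec_symVec k h₂),
    qWalk_mulVec_of_mulVec_eq_smul (anti r₁ h₁), qWalk_mulVec_of_mulVec_eq_smul (anti r₂ h₂)]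
  have hsub : r₁ - r₂ ≠ 0 := sub_ne_zero.2 hne
  simp [symVec, antisymVec]
  field_simp
  ring

theorem Complex.exp_mul_I_sub_exp_neg_mul_I (x : ℂ) :
    Complex.exp (x * Complex.I) - Complex.exp (-x * Complex.I) =
      2 * Complex.I * Complex.sin x := by
  rw [Complex.sin]
  ring_nf
  rw [Complex.I_sq]
  ring

theorem qWalk_doubleStar_centre_amplitude_of_real (k : ℕ) (t : ℝ) {r₁ r₂ : ℝ}
    (h₁ : r₁ ^ 2 = r₁ + k) (h₂ : r₂ ^ 2 = r₂ + k) (hne : r₁ ≠ r₂) :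
    (qWalk ((doubleStar k k).adjMatrix ℂ) t *ᵥ Pi.single (Sum.inl 0) 1) (Sum.inl 1) =
      Complex.I * ((r₁ * Real.sin (t * r₁) - r₂ * Real.sin (t * r₂)) / (r₁ - r₂) : ℝ) := by
  have hsub : (r₁ : ℂ) - r₂ ≠ 0 := by exact_mod_cast sub_ne_zero.2 hne
  have hmul (r : ℝ) : Complex.I * t * r = ((t * r : ℝ) : ℂ) * Complex.I := by push_cast; ring
  rw [qWalk_doubleStar_centre_amplitude k t (r₁ := r₁) (r₂ := r₂) (by exact_mod_cast h₁)
    (by exact_mod_cast h₂) (by exact_mod_cast hne), hmul, hmul, ← neg_mul, ← neg_mul,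
    Complex.exp_mul_I_sub_exp_neg_mul_I, Complex.exp_mul_I_sub_exp_neg_mul_I]
  push_cast
  field_simp

theorem abs_eq_one_of_abs_mul_add_mul_eq {p q a b : ℝ} (hp : 0 < p) (hq : 0 < q)
    (ha : |a| ≤ 1) (hb : |b| ≤ 1) (h : |p * a + q * b| = p + q) : |a| = 1 ∧ |b| = 1 := by
  have hle : |p * a + q * b| ≤ p * |a| + q * |b| :=
    calc |p * a + q * b| ≤ |p * a| + |q * b| := abs_add_le _ _
      _ = p * |a| + q * |b| := by rw [abs_mul, abs_mul, abs_of_pos hp, abs_of_pos hq]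
  constructor <;> nlinarith

theorem Int.one_add_four_mul_mul_sq_ne_sq (k a b : ℤ) :
    (1 + 4 * k) * (a + b + 1) ^ 2 ≠ (a - b) ^ 2 := by
  intro h
  have h4 : Even (4 : ℤ) := ⟨2, rfl⟩
  have := congrArg Even h
  simp [parity_simps, h4, ← Int.not_even_iff_odd] at this

theorem not_abs_sin_mul_eq_one_of_roots (k : ℕ) (τ : ℝ) {r₁ r₂ : ℝ}
    (h₁ : r₁ ^ 2 = r₁ + k) (h₂ : r₂ ^ 2 = r₂ + k) (hne : r₁ ≠ r₂) :
    ¬ (|Real.sin (τ * r₁)| = 1 ∧ |Real.sin (τ * r₂)| = 1) := by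
  rintro ⟨hs₁, hs₂⟩
  obtain ⟨a, ha⟩ := Real.abs_sin_eq_one_iff.1 hs₁
  obtain ⟨b, hb⟩ := Real.abs_sin_eq_one_iff.1 hs₂
  have hsum : r₁ + r₂ = 1 := by
    apply mul_left_cancel₀ (sub_ne_zero.2 hne)
    linear_combination h₁ - h₂
  have hprod : r₁ * r₂ = -k := by linear_combination r₁ * hsum - h₁
  have hτ : τ = (a + b + 1) * Real.pi := by linear_combination -τ * hsum - ha - hb
  have hτ' : τ * (r₁ - r₂) = (a - b) * Real.pi := by linear_combination hb - ha
  have hratio : (r₁ - r₂) * (a + b + 1) = a - b := by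
    apply mul_right_cancel₀ Real.pi_ne_zero
    linear_combination hτ' - (r₁ - r₂) * hτ
  apply Int.one_add_four_mul_mul_sq_ne_sq k a b
  have : ((1 + 4 * k) * (a + b + 1) ^ 2 : ℝ) = (a - b) ^ 2 := by
    rw [← hratio]
    linear_combination -(a + b + 1 : ℝ) ^ 2 * ((r₁ + r₂ + 1) * hsum - 4 * hprod)
  exact_mod_cast this

theorem exists_roots_sq_eq_self_add_of_pos {k : ℕ} (hk : 0 < k) :
    ∃ r₁ r₂ : ℝ, r₁ ^ 2 = r₁ + k ∧ r₂ ^ 2 = r₂ + k ∧ r₂ < 0 ∧ 0 < r₁ := by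
  have hk' : (0 : ℝ) < k := by exact_mod_cast hk
  have hsq : Real.sqrt (1 + 4 * k) ^ 2 = 1 + 4 * k := Real.sq_sqrt (by positivity)
  have hgt : 1 < Real.sqrt (1 + 4 * k) := by
    rw [Real.lt_sqrt zero_le_one]
    linarith
  refine ⟨(1 + Real.sqrt (1 + 4 * k)) / 2, (1 - Real.sqrt (1 + 4 * k)) / 2, ?_, ?_, ?_, ?_⟩
  · linear_combination hsq / 4
  · linear_combination hsq / 4
  · linarith
  · linarith

/-- in the symmetric double star `S_{k,k}` there is no perfect state transfer
between the two central vertices at any time. -/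
theorem no_pst_Skk_centres (k : ℕ) (hk : 0 < k) (τ : ℝ) :
    ¬ IsPST ((doubleStar k k).adjMatrix ℂ) (Sum.inl 0) (Sum.inl 1) τ := by
  rintro ⟨γ, hγ, hvec⟩
  obtain ⟨r₁, r₂, h₁, h₂, hr₂, hr₁⟩ := exists_roots_sq_eq_self_add_of_pos hk
  have hne : r₁ ≠ r₂ := by linarith
  have hamp := congrFun hvec (Sum.inl 1)
  rw [qWalk_doubleStar_centre_amplitude_of_real k τ h₁ h₂ hne] at hamp
  simp only [Pi.smul_apply, Pi.single_eq_same, smul_eq_mul, mul_one] at hamp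
  have habs : |r₁ * Real.sin (τ * r₁) + -r₂ * Real.sin (τ * r₂)| = r₁ + -r₂ := by
    have hpos : 0 < r₁ - r₂ := by linarith
    rw [← hamp, norm_mul, Complex.norm_I, one_mul, Complex.norm_real, Real.norm_eq_abs, abs_div,
      abs_of_pos hpos, div_eq_one_iff_eq hpos.ne'] at hγ
    simpa only [neg_mul, ← sub_eq_add_neg] using hγ
  exact not_abs_sin_mul_eq_one_of_roots k τ h₁ h₂ hne
    (abs_eq_one_of_abs_mul_add_mul_eq hr₁ (neg_pos.2 hr₂) (Real.abs_sin_le_one _)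
      (Real.abs_sin_le_one _) habs)
end
end

section
/- Let ℓ be a positive integer, let S_{2,ℓ} be the double star graph, and let u₁ and u₂ be the two vertices of degree one adjacent to the center u of degree three. If there is perfect state transfer from u₁ to u₂ at time t, then exp(iθt) = −1 for each of the four real numbers θ = ε·(1/2)·√(2ℓ+6+2δ√(ℓ²−2ℓ+9)) with ε, δ ∈ {1, −1}. -/
/-!
A symmetric adjacency matrix makes `U(t)` symmetric, so perfect state transfer
`U(t) e_a = γ e_b` gives `e^{itθ} x_a = γ x_b` for every eigenvector `x` with eigenvalue `θ`.
The pendant vertices `u₁, u₂` are twins, so `e_{u₁} - e_{u₂}` is a `0`-eigenvector and `γ = -1`.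
Each of the four numbers `θ` is a nonzero root of `θ⁴ - (ℓ + 3) θ² + 2ℓ`, and for such `θ` there
is an eigenvector constant on the classes of the partition `{u₁, u₂}, {u}, {v}, N(v) ∖ {u}`,
with `x_{u₁} = x_{u₂} = θ ≠ 0`; hence `e^{itθ} = γ = -1`.
-/

open Matrix

noncomputable section

open Complex

namespace Matrix

variable {n : Type*} [Fintype n] [DecidableEq n]

theorem exp_mulVec_of_mulVec_eq_smul_s5 {M : Matrix n n ℂ} {x : n → ℂ} {c : ℂ}
    (hx : M *ᵥ x = c • x) : NormedSpace.exp M *ᵥ x = Complex.exp c • x := by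
  let _ : NormedRing (Matrix n n ℂ) := Matrix.linftyOpNormedRing
  let _ : NormedAlgebra ℂ (Matrix n n ℂ) := Matrix.linftyOpNormedAlgebra
  have hpow : ∀ k : ℕ, M ^ k *ᵥ x = c ^ k • x := by
    intro k
    induction k with
    | zero => simp
    | succ k ih => rw [pow_succ', ← mulVec_mulVec, ih, mulVec_smul, hx, smul_smul, ← pow_succ]
  let L : Matrix n n ℂ →L[ℂ] (n → ℂ) :=
    LinearMap.toContinuousLinearMap (LinearMap.applyₗ x ∘ₗ Matrix.toLin'.toLinearMap)
  have hM := (NormedSpace.exp_series_hasSum_exp' (𝕂 := ℂ) M).mapL L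
  have hc := (NormedSpace.exp_series_hasSum_exp' (𝕂 := ℂ) c).smul_const x
  rw [← Complex.exp_eq_exp_ℂ] at hc
  refine hM.unique ?_
  convert hc using 2 with k
  rw [map_smul, smul_assoc, ← hpow]
  rfl

end Matrix

section QuantumWalk

variable {n : Type*} [Fintype n] [DecidableEq n] {A : Matrix n n ℂ}

theorem qWalk_mulVec_of_mulVec_eq_smul_s5 {x : n → ℂ} {θ : ℂ} (hx : A *ᵥ x = θ • x) (t : ℝ) :
    qWalk A t *ᵥ x = cexp (I * t * θ) • x := by
  refine Matrix.exp_mulVec_of_mulVec_eq_smul_s5 ?_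
  rw [Matrix.smul_mulVec, hx, smul_smul]

theorem Matrix.IsSymm.qWalk (hA : A.IsSymm) (t : ℝ) : (qWalk A t).IsSymm :=
  (hA.smul _).exp

theorem exp_mul_apply_eq_of_qWalk_mulVec_single (hA : A.IsSymm) {a b : n} {τ : ℝ} {γ : ℂ}
    (hU : qWalk A τ *ᵥ Pi.single a 1 = γ • Pi.single b 1) {x : n → ℂ} {θ : ℂ}
    (hx : A *ᵥ x = θ • x) : cexp (I * τ * θ) * x a = γ * x b := by
  have hcol : ∀ w, qWalk A τ a w = γ * (Pi.single b 1 : n → ℂ) w := fun w => by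
    simpa [(hA.qWalk τ).apply] using congrFun hU w
  calc cexp (I * τ * θ) * x a = (qWalk A τ *ᵥ x) a := by
        rw [qWalk_mulVec_of_mulVec_eq_smul_s5 hx, Pi.smul_apply, smul_eq_mul]
    _ = γ * x b := by simp [Matrix.mulVec, dotProduct, hcol, Pi.single_apply]

theorem phase_eq_neg_one_of_twins (hA : A.IsSymm) {a b : n} (hab : a ≠ b)
    (htwin : ∀ w, A w a = A w b) {τ : ℝ} {γ : ℂ}
    (hU : qWalk A τ *ᵥ Pi.single a 1 = γ • Pi.single b 1) : γ = -1 := by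
  have hker : A *ᵥ (Pi.single a 1 - Pi.single b 1) =
      (0 : ℂ) • (Pi.single a 1 - Pi.single b 1) := by
    ext w
    simp [Matrix.mulVec_sub, htwin]
  have hamp := exp_mul_apply_eq_of_qWalk_mulVec_single hA hU hker
  simp only [mul_zero, exp_zero, mul_one, Pi.sub_apply, Pi.single_eq_same,
    Pi.single_eq_of_ne hab, Pi.single_eq_of_ne hab.symm, sub_zero, zero_sub, mul_neg] at hamp
  linear_combination hamp

theorem IsPST.exp_eq_neg_one_of_twins (hA : A.IsSymm) {a b : n} (hab : a ≠ b)
    (htwin : ∀ w, A w a = A w b) {τ : ℝ} (h : IsPST A a b τ) {x : n → ℂ} {θ : ℂ}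
    (hx : A *ᵥ x = θ • x) (hxab : x a = x b) (hxa : x a ≠ 0) : cexp (I * τ * θ) = -1 := by
  obtain ⟨γ, -, hU⟩ := h
  rw [← phase_eq_neg_one_of_twins hA hab htwin hU]
  refine mul_right_cancel₀ hxa ?_
  rw [exp_mul_apply_eq_of_qWalk_mulVec_single hA hU hx, hxab]

end QuantumWalk

section DoubleStar

variable {k l : ℕ}

theorem doubleStar_adj_pendant_iff (w : DSVertex k l) (i : Fin k) :
    (doubleStar k l).Adj w (Sum.inr (Sum.inl i)) ↔ w = Sum.inl 0 := by
  rcases w with w | w | w <;> simp [doubleStar]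

theorem doubleStar_adjMatrix_mulVec_apply_inl_zero (x : DSVertex k l → ℂ) :
    ((doubleStar k l).adjMatrix ℂ *ᵥ x) (Sum.inl 0) =
      x (Sum.inl 1) + ∑ i, x (Sum.inr (Sum.inl i)) := by
  simp only [Matrix.mulVec, dotProduct, SimpleGraph.adjMatrix_apply, Fintype.sum_sum_type]
  simp [doubleStar]

theorem doubleStar_adjMatrix_mulVec_apply_inl_one (x : DSVertex k l → ℂ) :
    ((doubleStar k l).adjMatrix ℂ *ᵥ x) (Sum.inl 1) =
      x (Sum.inl 0) + ∑ j, x (Sum.inr (Sum.inr j)) := by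
  simp only [Matrix.mulVec, dotProduct, SimpleGraph.adjMatrix_apply, Fintype.sum_sum_type]
  simp [doubleStar]

theorem doubleStar_adjMatrix_mulVec_apply_inr_inl (x : DSVertex k l → ℂ) (i : Fin k) :
    ((doubleStar k l).adjMatrix ℂ *ᵥ x) (Sum.inr (Sum.inl i)) = x (Sum.inl 0) := by
  simp only [Matrix.mulVec, dotProduct, SimpleGraph.adjMatrix_apply, Fintype.sum_sum_type]
  simp [doubleStar]

theorem doubleStar_adjMatrix_mulVec_apply_inr_inr (x : DSVertex k l → ℂ) (j : Fin l) :
    ((doubleStar k l).adjMatrix ℂ *ᵥ x) (Sum.inr (Sum.inr j)) = x (Sum.inl 1) := by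
  simp only [Matrix.mulVec, dotProduct, SimpleGraph.adjMatrix_apply, Fintype.sum_sum_type]
  simp [doubleStar]

/-- Constant on the classes of the equitable partition `N(u) ∖ {v}, {u}, {v}, N(v) ∖ {u}`,
normalised by the value `θ` on the pendants of `u`. -/
def doubleStarEigenvector (k l : ℕ) (θ : ℂ) : DSVertex k l → ℂ
  | Sum.inl 0 => θ ^ 2
  | Sum.inl 1 => θ * (θ ^ 2 - k)
  | Sum.inr (Sum.inl _) => θ
  | Sum.inr (Sum.inr _) => θ ^ 2 - k

theorem doubleStar_adjMatrix_mulVec_eigenvector {θ : ℂ}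
    (hθ : θ ^ 4 - (k + l + 1) * θ ^ 2 + k * l = 0) :
    (doubleStar k l).adjMatrix ℂ *ᵥ doubleStarEigenvector k l θ =
      θ • doubleStarEigenvector k l θ := by
  funext p
  rw [Pi.smul_apply, smul_eq_mul]
  match p with
  | Sum.inl 0 =>
    rw [doubleStar_adjMatrix_mulVec_apply_inl_zero]
    simp only [doubleStarEigenvector, Finset.sum_const, Finset.card_univ, Fintype.card_fin,
      nsmul_eq_mul]
    ring
  | Sum.inl 1 =>
    rw [doubleStar_adjMatrix_mulVec_apply_inl_one]
    simp only [doubleStarEigenvector, Finset.sum_const, Finset.card_univ, Fintype.card_fin,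
      nsmul_eq_mul]
    linear_combination -hθ
  | Sum.inr (Sum.inl _) =>
    rw [doubleStar_adjMatrix_mulVec_apply_inr_inl]
    simp only [doubleStarEigenvector]
    ring
  | Sum.inr (Sum.inr _) =>
    rw [doubleStar_adjMatrix_mulVec_apply_inr_inr]
    rfl

theorem doubleStar_exp_eq_neg_one_of_isPST {i j : Fin k} (hij : i ≠ j) {t : ℝ}
    (h : IsPST ((doubleStar k l).adjMatrix ℂ) (Sum.inr (Sum.inl i)) (Sum.inr (Sum.inl j)) t)
    {θ : ℂ} (hθ0 : θ ≠ 0) (hθ : θ ^ 4 - (k + l + 1) * θ ^ 2 + k * l = 0) :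
    cexp (I * t * θ) = -1 :=
  h.exp_eq_neg_one_of_twins (SimpleGraph.isSymm_adjMatrix _) (by simpa using hij)
    (fun w => by simp [SimpleGraph.adjMatrix_apply, doubleStar_adj_pendant_iff])
    (doubleStar_adjMatrix_mulVec_eigenvector hθ) rfl hθ0

end DoubleStar

theorem biquadratic_eq_zero_of_sq_eq {p q d D θ : ℝ} (hd : d ^ 2 = 1)
    (hD : D ^ 2 = p ^ 2 - 4 * q) (hθ : θ ^ 2 = (p + d * D) / 2) :
    θ ^ 4 - p * θ ^ 2 + q = 0 := by
  rw [show θ ^ 4 = (θ ^ 2) ^ 2 by ring, hθ]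
  linear_combination (D ^ 2 / 4) * hd + hD / 4

/-- if `S_{2,ℓ}` has perfect state transfer between the two pendant vertices
adjacent to the centre of degree three at time `t`, then `exp(iθt) = -1` for each of the
four nonzero eigenvalues `θ = ε·(1/2)·√(2ℓ+6+2δ√(ℓ²−2ℓ+9))`, `ε, δ ∈ {1, −1}`. -/
theorem pst_S2l_eigenvalue_condition (l : ℕ) (hl : 0 < l) (t : ℝ)
    (h : IsPST ((doubleStar 2 l).adjMatrix ℂ)
        (Sum.inr (Sum.inl 0)) (Sum.inr (Sum.inl 1)) t) :
    ∀ e d : ℝ, (e = 1 ∨ e = -1) → (d = 1 ∨ d = -1) →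
      Complex.exp (Complex.I *
        ((e * (1 / 2) *
          Real.sqrt (2 * l + 6 + 2 * d * Real.sqrt ((l : ℝ) ^ 2 - 2 * l + 9)) : ℝ) : ℂ) *
        (t : ℂ)) = -1 := by
  intro e d he hd
  have hl' : (0 : ℝ) < l := by exact_mod_cast hl
  have he2 : e ^ 2 = 1 := by rcases he with rfl | rfl <;> norm_num
  have hd2 : d ^ 2 = 1 := by rcases hd with rfl | rfl <;> norm_num
  set D := √((l : ℝ) ^ 2 - 2 * l + 9)
  -- `ℓ² - 2ℓ + 9` is the discriminant of `X² - (ℓ + 3) X + 2ℓ`, whose roots are the `θ²`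
  have hD2 : D ^ 2 = ((l : ℝ) + 3) ^ 2 - 4 * (2 * l) := by
    rw [Real.sq_sqrt (by nlinarith)]
    ring
  have hD : D < l + 3 := by nlinarith [Real.sqrt_nonneg ((l : ℝ) ^ 2 - 2 * l + 9)]
  have hS : 0 < 2 * l + 6 + 2 * d * D := by
    rcases hd with rfl | rfl <;> nlinarith [Real.sqrt_nonneg ((l : ℝ) ^ 2 - 2 * l + 9)]
  set θ := e * (1 / 2) * √(2 * l + 6 + 2 * d * D)
  have hθ2 : θ ^ 2 = (l + 3 + d * D) / 2 := by
    rw [mul_pow, mul_pow, Real.sq_sqrt hS.le, he2]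
    ring
  have hθ0 : θ ≠ 0 := fun h0 => by rw [h0] at hθ2; linarith
  have hquartic := congrArg ofReal (biquadratic_eq_zero_of_sq_eq hd2 hD2 hθ2)
  push_cast at hquartic
  have key := doubleStar_exp_eq_neg_one_of_isPST (by decide) h (θ := θ) (by exact_mod_cast hθ0)
    (by push_cast; linear_combination hquartic)
  rwa [mul_right_comm] at key
end
end

section
/- Let X be a finite simple graph with adjacency matrix A and let U(t) = exp(itA). For every ε > 0 there exists T > 0 such that every real interval of length T contains a time t with ‖U(t) − I‖ < ε; that is, for every real s there is t with s ≤ t ≤ s + T and ‖exp(itA) − I‖ < ε. -/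
open Matrix

noncomputable section

attribute [local instance] Matrix.normedAddCommGroup

/-!
The walk `t ↦ U(t)` is a one-parameter subgroup of the unitary group, which is compact. Hence
finitely many translates `U(tᵢ) • W` of a neighbourhood `W` of `1` cover the closure of its orbit.
If all `|tᵢ| ≤ M`, then for every `s` some `U(tᵢ)⁻¹ U(s + M) = U(s + M - tᵢ)` lies in `W`, and
`s + M - tᵢ ∈ [s, s + 2M]`.
-/

open scoped Topology Pointwise

def IsRelativelyDense (S : Set ℝ) : Prop :=
  ∃ T : ℝ, 0 < T ∧ ∀ s : ℝ, ∃ t ∈ S, s ≤ t ∧ t ≤ s + T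

theorem isRelativelyDense_preimage_of_isCompact_closure_range {G : Type*} [Group G]
    [TopologicalSpace G] [IsTopologicalGroup G] {φ : ℝ → G}
    (hφ : ∀ s t, φ (s + t) = φ s * φ t) (hK : IsCompact (closure (Set.range φ)))
    {W : Set G} (hW : W ∈ 𝓝 1) : IsRelativelyDense (φ ⁻¹' W) := by
  have hcover : closure (Set.range φ) ⊆ ⋃ t, φ t • interior W := by
    intro x hx
    obtain ⟨_, hy, t, rfl⟩ := mem_closure_iff.mp hx ((· ⁻¹ * x) ⁻¹' interior W)
      (isOpen_interior.preimage (by fun_prop)) (by simpa using mem_interior_iff_mem_nhds.mpr hW)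
    exact Set.mem_iUnion.mpr ⟨t, Set.mem_smul_set_iff_inv_smul_mem.mpr hy⟩
  obtain ⟨F, hF⟩ := hK.elim_finite_subcover _ (fun t => isOpen_interior.smul _) hcover
  set M := ∑ t ∈ F, |t|
  have hM : ∀ t ∈ F, |t| ≤ M := fun t ht =>
    Finset.single_le_sum (f := fun t => |t|) (fun _ _ => abs_nonneg _) ht
  refine ⟨2 * M + 1, by positivity, fun s => ?_⟩
  obtain ⟨t₀, ht₀, hmem⟩ := Set.mem_iUnion₂.mp (hF (subset_closure ⟨s + M, rfl⟩))
  obtain ⟨hlo, hhi⟩ := abs_le.mp (hM t₀ ht₀)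
  refine ⟨s + M - t₀, ?_, by linarith, by linarith⟩
  have hsplit : φ (s + M) = φ t₀ * φ (s + M - t₀) := by rw [← hφ, add_sub_cancel]
  rw [hsplit, Set.mem_smul_set_iff_inv_smul_mem, smul_eq_mul, inv_mul_cancel_left] at hmem
  exact interior_subset (s := W) hmem

section QuantumWalk

variable {n : Type*} [Fintype n] [DecidableEq n]

theorem Matrix.isCompact_unitaryGroup {𝕜 : Type*} [RCLike 𝕜] :
    IsCompact (unitaryGroup n 𝕜 : Set (Matrix n n 𝕜)) :=
  (isCompact_univ_pi fun _ => isCompact_univ_pi fun _ => isCompact_closedBall (0 : 𝕜) 1)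
    |>.of_isClosed_subset (isClosed_unitary (R := Matrix n n 𝕜)) fun _ hU i _ j _ =>
      mem_closedBall_zero_iff.mpr (entry_norm_bound_of_unitary hU i j)

theorem qWalk_zero (A : Matrix n n ℂ) : qWalk A 0 = 1 := by
  simp [qWalk]

theorem qWalk_add (A : Matrix n n ℂ) (s t : ℝ) : qWalk A (s + t) = qWalk A s * qWalk A t := by
  rw [qWalk, qWalk, qWalk, ← Matrix.exp_add_of_commute _ _
    (((Commute.refl A).smul_left _).smul_right _), ← add_smul, Complex.ofReal_add, mul_add]

theorem star_qWalk {A : Matrix n n ℂ} (hA : A.IsHermitian) (t : ℝ) :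
    star (qWalk A t) = qWalk A (-t) := by
  rw [qWalk, qWalk, star_eq_conjTranspose, ← Matrix.exp_conjTranspose, conjTranspose_smul,
    hA.eq]
  congr 1
  simp

theorem qWalk_mem_unitaryGroup {A : Matrix n n ℂ} (hA : A.IsHermitian) (t : ℝ) :
    qWalk A t ∈ unitaryGroup n ℂ := by
  rw [Unitary.mem_iff, star_qWalk hA, ← qWalk_add, ← qWalk_add, neg_add_cancel, add_neg_cancel,
    qWalk_zero, and_self]

end QuantumWalk

/-- every continuous quantum walk on a graph is approximately periodic: for each
`ε > 0` there is `T > 0` such that every real interval of length `T` contains a time `t`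
with `‖U(t) − I‖ < ε`. -/
theorem approximately_periodic {V : Type*} [Fintype V] [DecidableEq V]
    (X : SimpleGraph V) [DecidableRel X.Adj]
    (ε : ℝ) (hε : 0 < ε) :
    ∃ T : ℝ, 0 < T ∧ ∀ s : ℝ, ∃ t : ℝ, s ≤ t ∧ t ≤ s + T ∧
      ‖qWalk (X.adjMatrix ℂ) t - 1‖ < ε := by
  let U (t : ℝ) : unitaryGroup V ℂ :=
    ⟨qWalk (X.adjMatrix ℂ) t, qWalk_mem_unitaryGroup (X.isHermitian_adjMatrix ℂ) t⟩
  have : CompactSpace (unitaryGroup V ℂ) := isCompact_iff_compactSpace.mp isCompact_unitaryGroup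
  have hW : {u : unitaryGroup V ℂ | ‖(u : Matrix V V ℂ) - 1‖ < ε} ∈ 𝓝 1 :=
    (isOpen_lt (by fun_prop) continuous_const).mem_nhds (by simpa using hε)
  obtain ⟨T, hT, hret⟩ := isRelativelyDense_preimage_of_isCompact_closure_range (φ := U)
    (fun s t => Subtype.ext (qWalk_add _ s t)) isClosed_closure.isCompact hW
  refine ⟨T, hT, fun s => ?_⟩
  obtain ⟨t, ht, hst, hts⟩ := hret s
  exact ⟨t, hst, hts, ht⟩
end
end
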